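/- Let V be a real vector space of odd finite dimension n and g a nondegenerate symmetric bilinear form on V. Let J₊, J₋ ∈ End(V) be g-skew-symmetric (g(J±x,y) = −g(x,J±y)) and X₊, X₋ ∈ V satisfy g(X±,X±) = 1, J±X± = 0 and J±² = −id_V + g(·,X±)X±. Define ℱ ∈ End(E(V)) by ℱ(X − g(X,·)) = J₋X − g(J₋X,·) and ℱ(X + g(X,·) + a) = (J₊X + aX₊) + g(J₊X + aX₊, ·) + (−g(X₊,X)) for all X ∈ V and a ∈ ℝ. Then ℱ is ⟨·,·⟩-skew-symmetric, ℱ commutes with the standard generalized metric endomorphism G, the kernel of ℱ is spanned by u₋ := X₋ − g(X₋,·), ⟨u₋,u₋⟩ = −1, and ℱ² = −Id − ⟨·,u₋⟩u₋. In other words, ℱ is a Bₙ-generalized almost complex structure on E(V) commuting with G, so (G, ℱ) is a Bₙ-generalized almost pseudo-Hermitian structure with components (g, J₊, J₋, X₊, X₋). -/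

import Mathlib

/-- The odd generalized tangent space `E(V) = V ⊕ V* ⊕ ℝ`. -/
abbrev EV (V : Type*) [AddCommGroup V] [Module ℝ V] : Type _ :=
  V × (V →ₗ[ℝ] ℝ) × ℝ

/-- The canonical scalar product of `E(V)`:
`⟨X+ξ+λ, Y+η+μ⟩ = (1/2)(η(X)+ξ(Y)) + λμ`. -/
noncomputable def spEV {V : Type*} [AddCommGroup V] [Module ℝ V]
    (p q : EV V) : ℝ :=
  (1 / 2) * (q.2.1 p.1 + p.2.1 q.1) + p.2.2 * q.2.2

/-!
Write `E(V) = E₋ ⊕ E₊` with `E₋ ≅ V` via `X ↦ X − g(X,·)` and `E₊ ≅ V ⊕ ℝ` via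
`(X, a) ↦ X + g(X,·) + a`. These summands are `⟨·,·⟩`-orthogonal, with induced forms `−g` and
`g ⊕ 1`, and `ℱ` preserves both: it acts as `J₋` on `E₋` and as
`K(X, a) = (J₊X + aX₊, −g(X₊, X))` on `E₊`. Hence `ℱ` commutes with `G = −1 ⊕ 1`, and
skew-symmetry, kernel and square of `ℱ` are read off from those of `J₋` and `K`:
`J₋` is skew with `J₋² = −1 + g(·,X₋)X₋`, so `ker J₋ = ℝX₋`, while `K` is skew with `K² = −1`.
-/

section

variable {V : Type*} [AddCommGroup V] [Module ℝ V]

def toEMinus (g : LinearMap.BilinForm ℝ V) : V →ₗ[ℝ] EV V where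
  toFun X := (X, -(g X), 0)
  map_add' X Y := by ext <;> simp [add_comm]
  map_smul' c X := by ext <;> simp

def toEPlus (g : LinearMap.BilinForm ℝ V) : V × ℝ →ₗ[ℝ] EV V where
  toFun z := (z.1, g z.1, z.2)
  map_add' z w := by ext <;> simp
  map_smul' c z := by ext <;> simp

/-- The action of `ℱ` on `E₊`, transported to `V × ℝ` along `toEPlus`. -/
def extendJ (g : LinearMap.BilinForm ℝ V) (J : V →ₗ[ℝ] V) (X₀ : V) : V × ℝ →ₗ[ℝ] V × ℝ where
  toFun z := (J z.1 + z.2 • X₀, -(g X₀ z.1))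
  map_add' z w := by ext <;> simp [add_smul] <;> abel
  map_smul' c z := by ext <;> simp [smul_smul]

variable {g : LinearMap.BilinForm ℝ V}

@[simp]
theorem toEMinus_apply (X : V) : toEMinus g X = (X, -(g X), 0) := rfl

@[simp]
theorem toEPlus_apply (z : V × ℝ) : toEPlus g z = (z.1, g z.1, z.2) := rfl

@[simp]
theorem extendJ_apply (J : V →ₗ[ℝ] V) (X₀ : V) (z : V × ℝ) :
    extendJ g J X₀ z = (J z.1 + z.2 • X₀, -(g X₀ z.1)) := rfl

theorem spEV_comm (p q : EV V) : spEV p q = spEV q p := by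
  simp only [spEV]
  ring

theorem spEV_add_left (p p' q : EV V) : spEV (p + p') q = spEV p q + spEV p' q := by
  simp only [spEV, Prod.fst_add, Prod.snd_add, map_add, LinearMap.add_apply]
  ring

theorem spEV_add_right (p q q' : EV V) : spEV p (q + q') = spEV p q + spEV p q' := by
  simp only [spEV_comm p, spEV_add_left]

theorem spEV_toEMinus_toEMinus (hg : ∀ x y, g x y = g y x) (X Y : V) :
    spEV (toEMinus g X) (toEMinus g Y) = -g X Y := by
  simp only [spEV, toEMinus_apply, LinearMap.neg_apply, hg Y X]
  ring

theorem spEV_toEMinus_toEPlus (hg : ∀ x y, g x y = g y x) (X : V) (z : V × ℝ) :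
    spEV (toEMinus g X) (toEPlus g z) = 0 := by
  simp only [spEV, toEMinus_apply, toEPlus_apply, LinearMap.neg_apply, hg z.1 X]
  ring

theorem spEV_toEPlus_toEMinus (hg : ∀ x y, g x y = g y x) (z : V × ℝ) (X : V) :
    spEV (toEPlus g z) (toEMinus g X) = 0 := by
  rw [spEV_comm, spEV_toEMinus_toEPlus hg]

theorem spEV_toEPlus_toEPlus (hg : ∀ x y, g x y = g y x) (z w : V × ℝ) :
    spEV (toEPlus g z) (toEPlus g w) = g z.1 w.1 + z.2 * w.2 := by
  simp only [spEV, toEPlus_apply, hg w.1 z.1]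
  ring

theorem toEMinus_add_toEPlus_eq_zero (hgnd : ∀ x, (∀ y, g x y = 0) → x = 0) {X : V}
    {z : V × ℝ} (h : toEMinus g X + toEPlus g z = 0) : X = 0 ∧ z = 0 := by
  simp only [toEMinus_apply, toEPlus_apply, Prod.ext_iff, Prod.fst_add, Prod.snd_add,
    Prod.fst_zero, Prod.snd_zero, zero_add] at h
  obtain ⟨hfst, hsnd, hthird⟩ := h
  have hz : z.1 = X := by
    rw [← sub_eq_zero]
    refine hgnd _ fun y => ?_
    simpa [sub_eq_add_neg, add_comm] using LinearMap.congr_fun hsnd y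
  have hX : X = 0 := by
    rw [hz, ← two_smul ℝ X] at hfst
    exact (smul_eq_zero.mp hfst).resolve_left two_ne_zero
  exact ⟨hX, Prod.ext (hz.trans hX) hthird⟩

theorem exists_toEMinus_add_toEPlus [FiniteDimensional ℝ V] (hg : ∀ x y, g x y = g y x)
    (hgnd : ∀ x, (∀ y, g x y = 0) → x = 0) (p : EV V) :
    ∃ X z, toEMinus g X + toEPlus g z = p := by
  have hnd : g.Nondegenerate := ⟨hgnd, fun y hy => hgnd y fun x => hg y x ▸ hy x⟩
  obtain ⟨W, hW⟩ : ∃ W, g W = p.2.1 :=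
    ⟨_, LinearMap.ext fun y => g.apply_toDual_symm_apply (hB := hnd) p.2.1 y⟩
  refine ⟨(1 / 2 : ℝ) • (p.1 - W), ((1 / 2 : ℝ) • (p.1 + W), p.2.2), ?_⟩
  ext
  · simp only [toEMinus_apply, toEPlus_apply, Prod.fst_add]
    module
  · simp only [map_smul, map_sub, map_add, toEMinus_apply, toEPlus_apply, Prod.smul_mk,
      Prod.mk_sub_mk, Prod.mk_add_mk, LinearMap.add_apply, LinearMap.smul_apply,
      LinearMap.sub_apply, LinearMap.neg_apply, smul_eq_mul, ← hW]
    ring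
  · simp

theorem extendJ_extendJ (hg : ∀ x y, g x y = g y x) {J : V →ₗ[ℝ] V}
    (hJ : ∀ x y, g (J x) y = -g x (J y)) {X₀ : V} (hX₀ : g X₀ X₀ = 1) (hJX₀ : J X₀ = 0)
    (hJ2 : ∀ x, J (J x) = -x + g x X₀ • X₀) (z : V × ℝ) :
    extendJ g J X₀ (extendJ g J X₀ z) = -z := by
  have hX₀J : g X₀ (J z.1) = 0 := by simpa [hJX₀] using hJ X₀ z.1
  ext
  · simp only [extendJ_apply, map_add, map_smul, hJX₀, hJ2, hg z.1 X₀, Prod.fst_neg]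
    module
  · simp [hX₀J, hX₀]

theorem extendJ_skew (hg : ∀ x y, g x y = g y x) {J : V →ₗ[ℝ] V}
    (hJ : ∀ x y, g (J x) y = -g x (J y)) (X₀ : V) (z w : V × ℝ) :
    g (extendJ g J X₀ z).1 w.1 + (extendJ g J X₀ z).2 * w.2 =
      -(g z.1 (extendJ g J X₀ w).1 + z.2 * (extendJ g J X₀ w).2) := by
  simp only [extendJ_apply, map_add, map_smul, LinearMap.add_apply,
    LinearMap.smul_apply, smul_eq_mul, hJ, hg z.1 X₀]
  ring

variable {F : EV V →ₗ[ℝ] EV V} {J : V →ₗ[ℝ] V} {K : V × ℝ →ₗ[ℝ] V × ℝ}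

theorem spEV_map_left_eq_neg (hg : ∀ x y, g x y = g y x)
    (hdecomp : ∀ p, ∃ X z, toEMinus g X + toEPlus g z = p)
    (hFm : ∀ X, F (toEMinus g X) = toEMinus g (J X))
    (hFp : ∀ z, F (toEPlus g z) = toEPlus g (K z))
    (hJ : ∀ x y, g (J x) y = -g x (J y))
    (hK : ∀ z w, g (K z).1 w.1 + (K z).2 * w.2 = -(g z.1 (K w).1 + z.2 * (K w).2))
    (p q : EV V) : spEV (F p) q = -spEV p (F q) := by
  obtain ⟨X, z, rfl⟩ := hdecomp p
  obtain ⟨Y, w, rfl⟩ := hdecomp q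
  simp only [map_add, hFm, hFp, spEV_add_left, spEV_add_right, spEV_toEMinus_toEMinus hg,
    spEV_toEMinus_toEPlus hg, spEV_toEPlus_toEMinus hg, spEV_toEPlus_toEPlus hg, hJ, hK]
  ring

theorem map_comm_of_preserves_eigenspaces {G : EV V →ₗ[ℝ] EV V}
    (hdecomp : ∀ p, ∃ X z, toEMinus g X + toEPlus g z = p)
    (hFm : ∀ X, F (toEMinus g X) = toEMinus g (J X))
    (hFp : ∀ z, F (toEPlus g z) = toEPlus g (K z))
    (hGm : ∀ X, G (toEMinus g X) = -toEMinus g X) (hGp : ∀ z, G (toEPlus g z) = toEPlus g z)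
    (p : EV V) : F (G p) = G (F p) := by
  obtain ⟨X, z, rfl⟩ := hdecomp p
  simp only [map_add, map_neg, hFm, hFp, hGm, hGp]

theorem ker_eq_span_toEMinus (hgnd : ∀ x, (∀ y, g x y = 0) → x = 0)
    (hdecomp : ∀ p, ∃ X z, toEMinus g X + toEPlus g z = p)
    (hFm : ∀ X, F (toEMinus g X) = toEMinus g (J X))
    (hFp : ∀ z, F (toEPlus g z) = toEPlus g (K z))
    {X₀ : V} (hJX₀ : J X₀ = 0) (hJ2 : ∀ x, J (J x) = -x + g x X₀ • X₀)
    (hK2 : ∀ z, K (K z) = -z) :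
    LinearMap.ker F = Submodule.span ℝ {toEMinus g X₀} := by
  apply le_antisymm
  · intro p hp
    obtain ⟨X, z, rfl⟩ := hdecomp p
    rw [LinearMap.mem_ker, map_add, hFm, hFp] at hp
    obtain ⟨hJX, hKz⟩ := toEMinus_add_toEPlus_eq_zero hgnd hp
    have hz : z = 0 := by rw [← neg_neg z, ← hK2 z, hKz, map_zero, neg_zero]
    have hX : X = g X X₀ • X₀ := by
      have := hJ2 X
      rwa [hJX, map_zero, eq_comm, neg_add_eq_zero] at this
    rw [hz, map_zero, add_zero, hX, map_smul]
    exact Submodule.smul_mem _ _ (Submodule.mem_span_singleton_self _)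
  · rw [Submodule.span_le, Set.singleton_subset_iff, SetLike.mem_coe, LinearMap.mem_ker, hFm,
      hJX₀, map_zero]

theorem map_map_eq_neg_sub_spEV_smul (hg : ∀ x y, g x y = g y x)
    (hdecomp : ∀ p, ∃ X z, toEMinus g X + toEPlus g z = p)
    (hFm : ∀ X, F (toEMinus g X) = toEMinus g (J X))
    (hFp : ∀ z, F (toEPlus g z) = toEPlus g (K z))
    {X₀ : V} (hJ2 : ∀ x, J (J x) = -x + g x X₀ • X₀) (hK2 : ∀ z, K (K z) = -z) (p : EV V) :
    F (F p) = -p - spEV p (toEMinus g X₀) • toEMinus g X₀ := by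
  obtain ⟨X, z, rfl⟩ := hdecomp p
  simp only [map_add, hFm, hFp, hJ2, hK2, map_neg, map_smul, spEV_add_left,
    spEV_toEMinus_toEMinus hg, spEV_toEPlus_toEMinus hg, add_zero]
  module

end

theorem stmt_3 {V : Type*} [AddCommGroup V] [Module ℝ V] [FiniteDimensional ℝ V]
    (g : LinearMap.BilinForm ℝ V)
    (hgsymm : ∀ x y, g x y = g y x)
    (hgnd : ∀ x, (∀ y, g x y = 0) → x = 0)
    (Jp Jm : V →ₗ[ℝ] V)
    (hJpskew : ∀ x y, g (Jp x) y = - g x (Jp y))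
    (hJmskew : ∀ x y, g (Jm x) y = - g x (Jm y))
    (Xp Xm : V)
    (hXp : g Xp Xp = 1) (hXm : g Xm Xm = 1)
    (hJpXp : Jp Xp = 0) (hJmXm : Jm Xm = 0)
    (hJp2 : ∀ x, Jp (Jp x) = -x + g x Xp • Xp)
    (hJm2 : ∀ x, Jm (Jm x) = -x + g x Xm • Xm)
    (F : EV V →ₗ[ℝ] EV V)
    (hFminus : ∀ X : V, F (X, -(g X), 0) = (Jm X, -(g (Jm X)), 0))
    (hFplus : ∀ (X : V) (a : ℝ),
      F (X, g X, a) = (Jp X + a • Xp, g (Jp X + a • Xp), -(g Xp X))) :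
    (∀ p q : EV V, spEV (F p) q = - spEV p (F q)) ∧
    (∀ G : EV V →ₗ[ℝ] EV V,
      (∀ X : V, G (X, -(g X), 0) = (-X, g X, 0)) →
      (∀ (X : V) (a : ℝ), G (X, g X, a) = (X, g X, a)) →
      ∀ p : EV V, F (G p) = G (F p)) ∧
    LinearMap.ker F = Submodule.span ℝ {((Xm, -(g Xm), 0) : EV V)} ∧
    spEV ((Xm, -(g Xm), 0) : EV V) ((Xm, -(g Xm), 0) : EV V) = -1 ∧
    (∀ p : EV V,
      F (F p) = -p - spEV p ((Xm, -(g Xm), 0) : EV V) • ((Xm, -(g Xm), 0) : EV V)) := by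
  have hFm : ∀ X, F (toEMinus g X) = toEMinus g (Jm X) := hFminus
  have hFp : ∀ z, F (toEPlus g z) = toEPlus g (extendJ g Jp Xp z) := fun z => hFplus z.1 z.2
  have hdecomp := exists_toEMinus_add_toEPlus hgsymm hgnd
  have hK2 := extendJ_extendJ hgsymm hJpskew hXp hJpXp hJp2
  refine ⟨spEV_map_left_eq_neg hgsymm hdecomp hFm hFp hJmskew (extendJ_skew hgsymm hJpskew Xp),
    fun G hGm hGp => map_comm_of_preserves_eigenspaces hdecomp hFm hFp
      (fun X => (hGm X).trans (by simp)) (fun z => hGp z.1 z.2),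
    ker_eq_span_toEMinus hgnd hdecomp hFm hFp hJmXm hJm2 hK2,
    (spEV_toEMinus_toEMinus hgsymm Xm Xm).trans (by rw [hXm]),
    map_map_eq_neg_sub_spEV_smul hgsymm hdecomp hFm hFp hJm2 hK2⟩
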